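/- Let G, G₁, G₂ be simple mixed graphs on the same vertex set Fin n (n ≥ 1) such that G = G₁ ⊕ G₂ is a factorization, i.e., E = E₁ + E₂ and A = A₁ + A₂ pointwise. Then (i) max{ξ₁(G₁), ξ₁(G₂)} ≤ ξ₁(G) ≤ ξ₁(G₁) + ξ₁(G₂), and (ii) ξ₂ₙ(G₁) + ξ₂ₙ(G₂) ≤ ξ₂ₙ(G). -/

import Mathlib

/-!
The signless Laplacian is additive over a factorization, `𝓘Q(G) = 𝓘Q(G₁) + 𝓘Q(G₂)`, and it is
positive semidefinite: it equals `diagonal (row sums of 𝓘(G)) + 𝓘(G)` with `𝓘(G)` symmetric and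
entrywise nonnegative, so its quadratic form is `½ ∑ᵢⱼ 𝓘ᵢⱼ (xᵢ + xⱼ)²`. In the Loewner order,
`ξ₁(G)` is the least `t` with `𝓘Q(G) ≤ t • 1` and `ξ₂ₙ(G)` the greatest `t` with `t • 1 ≤ 𝓘Q(G)`.
Hence `𝓘Q(G₁) ≤ 𝓘Q(G) ≤ ξ₁(G) • 1`, and adding the Loewner bounds of `G₁` and `G₂` gives the
other two inequalities.
-/

set_option linter.unusedSectionVars false

open Matrix Finset Polynomial

variable {V : Type*} [Fintype V] [DecidableEq V]

/-- Undirected adjacency matrix of the mixed graph with edge-multiplicity function `E`: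
`(u,v)`-entry `E u v` for `u ≠ v`, and `(v,v)`-entry `2 * E v v`. -/
def Au (E : V → V → ℕ) : Matrix V V ℝ :=
  Matrix.of fun u v => if u = v then ((2 * E v v : ℕ) : ℝ) else ((E u v : ℕ) : ℝ)

/-- Arc matrix of the mixed graph with arc-multiplicity function `A`. -/
def Bm (A : V → V → ℕ) : Matrix V V ℝ := Matrix.of fun u v => ((A u v : ℕ) : ℝ)

/-- Undirected degree `d v`. -/
def dU (E : V → V → ℕ) (v : V) : ℕ :=
  (∑ u ∈ Finset.univ.filter (fun u => u ≠ v), E v u) + 2 * E v v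

/-- Out-degree `d⁺ v`. -/
def dOut (A : V → V → ℕ) (v : V) : ℕ := ∑ u, A v u

/-- In-degree `d⁻ v`. -/
def dIn (A : V → V → ℕ) (v : V) : ℕ := ∑ u, A u v

/-- Integrated adjacency matrix `𝓘(G) = [[Aᵤ, B], [Bᵀ, Aᵤ]]`. -/
def intAdj (E A : V → V → ℕ) : Matrix (V ⊕ V) (V ⊕ V) ℝ :=
  Matrix.fromBlocks (Au E) (Bm A) (Bm A)ᵀ (Au E)

/-- Integrated degree matrix `𝓘ᴰ(G)`. -/
def intDeg (E A : V → V → ℕ) : Matrix (V ⊕ V) (V ⊕ V) ℝ :=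
  Matrix.diagonal (Sum.elim (fun v => ((dU E v + dOut A v : ℕ) : ℝ))
    (fun v => ((dU E v + dIn A v : ℕ) : ℝ)))

/-- Integrated Laplacian matrix `𝓘ᴸ(G) = 𝓘ᴰ(G) - 𝓘(G)`. -/
def intLap (E A : V → V → ℕ) : Matrix (V ⊕ V) (V ⊕ V) ℝ := intDeg E A - intAdj E A

/-- Integrated signless Laplacian matrix `𝓘Q(G) = 𝓘ᴰ(G) + 𝓘(G)`. -/
def intQ (E A : V → V → ℕ) : Matrix (V ⊕ V) (V ⊕ V) ℝ := intDeg E A + intAdj E A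

/-- A mixed graph is simple: multiplicities at most 1, no loops, no directed loops. -/
def IsSimple (E A : V → V → ℕ) : Prop :=
  (∀ u v, E u v ≤ 1) ∧ (∀ u v, A u v ≤ 1) ∧ (∀ v, E v v = 0) ∧ (∀ v, A v v = 0)

/-- Number of edges (excluding loops): `e(G) = (1/2)·Σ_{u ≠ v} E u v`. -/
noncomputable def numEdges (E : V → V → ℕ) : ℝ :=
  (∑ u, ∑ v ∈ Finset.univ.filter (fun v => v ≠ u), (E u v : ℝ)) / 2

/-- Number of loops: `l(G) = Σ_v E v v`. -/
noncomputable def numLoops (E : V → V → ℕ) : ℝ := ∑ v, (E v v : ℝ)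

/-- Number of arcs (including directed loops): `a(G) = Σ_{u,v} A u v`. -/
noncomputable def numArcs (A : V → V → ℕ) : ℝ := ∑ u, ∑ v, (A u v : ℝ)

lemma intAdj_isHermitian (E A : V → V → ℕ) (hE : ∀ u v, E u v = E v u) :
    (intAdj E A).IsHermitian := by
  have hAu : (Au E)ᵀ = Au E := by
    ext u v
    by_cases h : u = v
    · subst h; rfl
    · simp [Au, Matrix.transpose_apply, h, Ne.symm h, hE u v]
  show (intAdj E A)ᴴ = intAdj E A
  rw [Matrix.conjTranspose_eq_transpose_of_trivial]
  unfold intAdj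
  rw [Matrix.fromBlocks_transpose, hAu, Matrix.transpose_transpose]

lemma intLap_isHermitian (E A : V → V → ℕ) (hE : ∀ u v, E u v = E v u) :
    (intLap E A).IsHermitian :=
  (Matrix.isHermitian_diagonal _).sub (intAdj_isHermitian E A hE)

lemma intQ_isHermitian (E A : V → V → ℕ) (hE : ∀ u v, E u v = E v u) :
    (intQ E A).IsHermitian :=
  (Matrix.isHermitian_diagonal _).add (intAdj_isHermitian E A hE)

/-- The non-increasing rearrangement of a finite tuple of reals. -/
noncomputable def sortDesc {N : ℕ} (f : Fin N → ℝ) : Fin N → ℝ :=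
  fun i => (f ∘ Tuple.sort f) i.rev

/-- The eigenvalues of the integrated Laplacian matrix `𝓘ᴸ(G)`, in non-increasing order:
`nuT E A hE i` is `ν_{i+1}(G)` (0-indexed). -/
noncomputable def nuT {n : ℕ} (E A : Fin n → Fin n → ℕ) (hE : ∀ u v, E u v = E v u) :
    Fin (n + n) → ℝ :=
  sortDesc (fun i => (intLap_isHermitian E A hE).eigenvalues (finSumFinEquiv.symm i))

/-- The eigenvalues of the integrated signless Laplacian matrix `𝓘Q(G)`, in non-increasing
order: `xiT E A hE i` is `ξ_{i+1}(G)` (0-indexed). -/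
noncomputable def xiT {n : ℕ} (E A : Fin n → Fin n → ℕ) (hE : ∀ u v, E u v = E v u) :
    Fin (n + n) → ℝ :=
  sortDesc (fun i => (intQ_isHermitian E A hE).eigenvalues (finSumFinEquiv.symm i))

/-- The eigenvalues of the integrated adjacency matrix `𝓘(G)`, in non-increasing order:
`lamT E A hE i` is `λ_{i+1}(G)` (0-indexed). -/
noncomputable def lamT {n : ℕ} (E A : Fin n → Fin n → ℕ) (hE : ∀ u v, E u v = E v u) :
    Fin (n + n) → ℝ :=
  sortDesc (fun i => (intAdj_isHermitian E A hE).eigenvalues (finSumFinEquiv.symm i))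

open scoped MatrixOrder

section Spectral

variable {m : Type*} [Fintype m] [DecidableEq m]

theorem Matrix.IsHermitian.le_algebraMap_iff {M : Matrix m m ℝ} (hM : M.IsHermitian) {t : ℝ} :
    M ≤ algebraMap ℝ _ t ↔ ∀ i, hM.eigenvalues i ≤ t := by
  rw [le_algebraMap_iff_spectrum_le hM.isSelfAdjoint, hM.spectrum_real_eq_range_eigenvalues,
    Set.forall_mem_range]

theorem Matrix.IsHermitian.algebraMap_le_iff {M : Matrix m m ℝ} (hM : M.IsHermitian) {t : ℝ} :
    algebraMap ℝ _ t ≤ M ↔ ∀ i, t ≤ hM.eigenvalues i := by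
  rw [algebraMap_le_iff_le_spectrum hM.isSelfAdjoint, hM.spectrum_real_eq_range_eigenvalues,
    Set.forall_mem_range]

theorem Matrix.posSemidef_diagonal_rowSum_add {M : Matrix m m ℝ} (hM : M.IsHermitian)
    (hM_nonneg : ∀ i j, 0 ≤ M i j) : (diagonal (fun i => ∑ j, M i j) + M).PosSemidef := by
  refine .of_dotProduct_mulVec_nonneg ((isHermitian_diagonal _).add hM) fun x => ?_
  have hquad : star x ⬝ᵥ (diagonal (fun i => ∑ j, M i j) + M) *ᵥ x
      = ∑ i, ∑ j, (M i j * x i ^ 2 + M i j * x i * x j) := by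
    rw [star_trivial, add_mulVec, dotProduct_add]
    simp only [dotProduct, mulVec_diagonal]
    simp only [mulVec, dotProduct, Finset.mul_sum, Finset.sum_mul, Finset.sum_add_distrib]
    congr 1 <;> exact Finset.sum_congr rfl fun i _ => Finset.sum_congr rfl fun j _ => by ring
  have hswap : ∑ i, ∑ j, M i j * x j ^ 2 = ∑ i, ∑ j, M i j * x i ^ 2 := by
    rw [Finset.sum_comm]
    refine Finset.sum_congr rfl fun i _ => Finset.sum_congr rfl fun j _ => ?_
    rw [← hM.apply i j, star_trivial]
  have hcross : ∑ i, ∑ j, M i j * (2 * x i * x j) = 2 * ∑ i, ∑ j, M i j * x i * x j := by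
    simp only [Finset.mul_sum]
    exact Finset.sum_congr rfl fun i _ => Finset.sum_congr rfl fun j _ => by ring
  have hsq : ∑ i, ∑ j, M i j * (x i + x j) ^ 2
      = 2 * ∑ i, ∑ j, (M i j * x i ^ 2 + M i j * x i * x j) := by
    simp only [add_sq, mul_add, Finset.sum_add_distrib, hswap, hcross]
    ring
  have : 0 ≤ ∑ i, ∑ j, M i j * (x i + x j) ^ 2 :=
    Finset.sum_nonneg fun i _ => Finset.sum_nonneg fun j _ =>
      mul_nonneg (hM_nonneg i j) (sq_nonneg _)
  linarith

end Spectral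

section SortDesc

variable {N : ℕ} (f : Fin N → ℝ)

theorem range_sortDesc : Set.range (sortDesc f) = Set.range f := by
  ext y
  constructor
  · rintro ⟨i, rfl⟩
    exact ⟨_, rfl⟩
  · rintro ⟨j, rfl⟩
    exact ⟨((Tuple.sort f)⁻¹ j).rev, by simp [sortDesc]⟩

theorem sortDesc_antitone : Antitone (sortDesc f) :=
  fun _ _ hij => Tuple.monotone_sort f (Fin.rev_le_rev.mpr hij)

theorem sortDesc_zero_le_iff (hN : 0 < N) {t : ℝ} :
    sortDesc f ⟨0, hN⟩ ≤ t ↔ ∀ j, f j ≤ t := by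
  rw [← Set.forall_mem_range (p := (· ≤ t)), ← range_sortDesc, Set.forall_mem_range]
  exact ⟨fun h i => (sortDesc_antitone f (Nat.zero_le i.val)).trans h, fun h => h _⟩

theorem le_sortDesc_last_iff (hN : 0 < N) {t : ℝ} :
    t ≤ sortDesc f ⟨N - 1, Nat.sub_one_lt_of_lt hN⟩ ↔ ∀ j, t ≤ f j := by
  rw [← Set.forall_mem_range (p := (t ≤ ·)), ← range_sortDesc, Set.forall_mem_range]
  exact ⟨fun h i => h.trans (sortDesc_antitone f (Nat.le_sub_one_of_lt i.isLt)), fun h => h _⟩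

end SortDesc

section Factorization

variable (E₁ E₂ A₁ A₂ : V → V → ℕ)

theorem Au_add : Au (E₁ + E₂) = Au E₁ + Au E₂ := by
  ext u v
  by_cases huv : u = v <;> simp [Au, huv, mul_add]

theorem Bm_add : Bm (A₁ + A₂) = Bm A₁ + Bm A₂ := by
  ext u v
  simp [Bm]

theorem intAdj_add : intAdj (E₁ + E₂) (A₁ + A₂) = intAdj E₁ A₁ + intAdj E₂ A₂ := by
  simp only [intAdj, Au_add, Bm_add, transpose_add, fromBlocks_add]

theorem dU_add (v : V) : dU (E₁ + E₂) v = dU E₁ v + dU E₂ v := by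
  simp only [dU, Pi.add_apply, Finset.sum_add_distrib]
  ring

theorem dOut_add (v : V) : dOut (A₁ + A₂) v = dOut A₁ v + dOut A₂ v := by
  simp only [dOut, Pi.add_apply, Finset.sum_add_distrib]

theorem dIn_add (v : V) : dIn (A₁ + A₂) v = dIn A₁ v + dIn A₂ v := by
  simp only [dIn, Pi.add_apply, Finset.sum_add_distrib]

theorem intDeg_add : intDeg (E₁ + E₂) (A₁ + A₂) = intDeg E₁ A₁ + intDeg E₂ A₂ := by
  rw [intDeg, intDeg, intDeg, diagonal_add]
  congr 1
  ext (v | v) <;> simp only [Sum.elim_inl, Sum.elim_inr, dU_add, dOut_add, dIn_add] <;>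
    push_cast <;> ring

theorem intQ_add : intQ (E₁ + E₂) (A₁ + A₂) = intQ E₁ A₁ + intQ E₂ A₂ := by
  rw [intQ, intQ, intQ, intDeg_add, intAdj_add]
  abel

end Factorization

section SignlessLaplacian

variable (E A : V → V → ℕ)

theorem intAdj_nonneg (i j : V ⊕ V) : 0 ≤ intAdj E A i j := by
  rcases i with i | i <;> rcases j with j | j <;> simp only [intAdj, Au, Bm, fromBlocks_apply₁₁,
    fromBlocks_apply₁₂, fromBlocks_apply₂₁, fromBlocks_apply₂₂, transpose_apply, of_apply] <;>
    (try split_ifs) <;> positivity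

theorem sum_Au_eq_dU (v : V) : ∑ u, Au E v u = dU E v := by
  rw [← Finset.add_sum_erase _ _ (Finset.mem_univ v), dU, ← Finset.filter_ne', add_comm,
    Nat.cast_add, Nat.cast_sum]
  congr 1
  · refine Finset.sum_congr rfl fun u hu => ?_
    simp [Au, (Finset.mem_filter.mp hu).2.symm]
  · simp [Au]

theorem intDeg_eq_diagonal_rowSum : intDeg E A = diagonal fun i => ∑ j, intAdj E A i j := by
  rw [intDeg]
  congr 1
  ext (v | v) <;> simp [Fintype.sum_sum_type, intAdj, sum_Au_eq_dU, dOut, dIn, Bm, add_comm]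

theorem intQ_posSemidef (hE : ∀ u v, E u v = E v u) : (intQ E A).PosSemidef := by
  rw [intQ, intDeg_eq_diagonal_rowSum]
  exact posSemidef_diagonal_rowSum_add (intAdj_isHermitian E A hE) (intAdj_nonneg E A)

end SignlessLaplacian

theorem intQ_le_algebraMap_iff {n : ℕ} (hn : 0 < n) (E A : Fin n → Fin n → ℕ)
    (hE : ∀ u v, E u v = E v u) {t : ℝ} :
    intQ E A ≤ algebraMap ℝ _ t ↔ xiT E A hE ⟨0, Nat.add_pos_left hn n⟩ ≤ t := by
  rw [xiT, sortDesc_zero_le_iff _ (Nat.add_pos_left hn n),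
    (intQ_isHermitian E A hE).le_algebraMap_iff]
  exact finSumFinEquiv.symm.forall_congr_right.symm

theorem algebraMap_le_intQ_iff {n : ℕ} (hn : 0 < n) (E A : Fin n → Fin n → ℕ)
    (hE : ∀ u v, E u v = E v u) {t : ℝ} :
    algebraMap ℝ _ t ≤ intQ E A ↔
      t ≤ xiT E A hE ⟨n + n - 1, Nat.sub_one_lt_of_lt (Nat.add_pos_left hn n)⟩ := by
  rw [xiT, le_sortDesc_last_iff _ (Nat.add_pos_left hn n),
    (intQ_isHermitian E A hE).algebraMap_le_iff]
  exact finSumFinEquiv.symm.forall_congr_right.symm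

/-- if `G = G₁ ⊕ G₂` is a factorization of a simple mixed graph then
(i) `max{ξ₁(G₁), ξ₁(G₂)} ≤ ξ₁(G) ≤ ξ₁(G₁) + ξ₁(G₂)` and
(ii) `ξ₂ₙ(G₁) + ξ₂ₙ(G₂) ≤ ξ₂ₙ(G)`. -/
theorem stmt17 (n : ℕ) (hn : 0 < n) (E A E₁ A₁ E₂ A₂ : Fin n → Fin n → ℕ)
    (hE : ∀ u v, E u v = E v u) (hE₁ : ∀ u v, E₁ u v = E₁ v u) (hE₂ : ∀ u v, E₂ u v = E₂ v u)
    (hEsum : ∀ u v, E u v = E₁ u v + E₂ u v) (hAsum : ∀ u v, A u v = A₁ u v + A₂ u v) :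
    (max (xiT E₁ A₁ hE₁ ⟨0, by omega⟩) (xiT E₂ A₂ hE₂ ⟨0, by omega⟩) ≤
        xiT E A hE ⟨0, by omega⟩) ∧
    (xiT E A hE ⟨0, by omega⟩ ≤ xiT E₁ A₁ hE₁ ⟨0, by omega⟩ + xiT E₂ A₂ hE₂ ⟨0, by omega⟩) ∧
    (xiT E₁ A₁ hE₁ ⟨n + n - 1, by omega⟩ + xiT E₂ A₂ hE₂ ⟨n + n - 1, by omega⟩ ≤
        xiT E A hE ⟨n + n - 1, by omega⟩) := by
  obtain rfl : E = E₁ + E₂ := funext fun u => funext (hEsum u)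
  obtain rfl : A = A₁ + A₂ := funext fun u => funext (hAsum u)
  have hQ₁ := (intQ_posSemidef E₁ A₁ hE₁).nonneg
  have hQ₂ := (intQ_posSemidef E₂ A₂ hE₂).nonneg
  have hQ_top := (intQ_le_algebraMap_iff hn (E₁ + E₂) (A₁ + A₂) hE).mpr le_rfl
  rw [intQ_add] at hQ_top
  have hQ₁_top := (intQ_le_algebraMap_iff hn E₁ A₁ hE₁).mpr le_rfl
  have hQ₂_top := (intQ_le_algebraMap_iff hn E₂ A₂ hE₂).mpr le_rfl
  have hQ₁_bot := (algebraMap_le_intQ_iff hn E₁ A₁ hE₁).mpr le_rfl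
  have hQ₂_bot := (algebraMap_le_intQ_iff hn E₂ A₂ hE₂).mpr le_rfl
  refine ⟨max_le ?_ ?_, ?_, ?_⟩
  · rw [← intQ_le_algebraMap_iff hn]
    exact (le_add_of_nonneg_right hQ₂).trans hQ_top
  · rw [← intQ_le_algebraMap_iff hn]
    exact (le_add_of_nonneg_left hQ₁).trans hQ_top
  · rw [← intQ_le_algebraMap_iff hn, intQ_add, map_add]
    exact add_le_add hQ₁_top hQ₂_top
  · rw [← algebraMap_le_intQ_iff hn, intQ_add, map_add]
    exact add_le_add hQ₁_bot hQ₂_bot
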